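/- For all natural numbers n and k, the number of n×k lonesum 01 matrices (with no further restriction: all-zero rows and columns and arbitrary multiplicities allowed) equals ∑_{m=0}^{min(n,k)} m! · S(n+1, m+1) · m! · S(k+1, m+1). -/

import Mathlib

/-!
In a lonesum matrix any two rows are comparable: the support of one contains the support of
the other (otherwise the two rows and two witnessing columns form a forbidden submatrix). So the
distinct nonzero row supports form a chain `S₁ ⊊ ⋯ ⊊ Sₘ`, ordered by their sizes. Let `f i` be
the position of the support of row `i` in the chain (`0` for a zero row) and `g j` the number of
`Sₜ` containing column `j`; then `M i j = 1 ↔ m < f i + g j`, and `f`, `g` attain every value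
in `{1, …, m}`. Conversely such a threshold matrix is lonesum and determines `m`, `f` and `g`
(`m` and `f` through the ranks of its row sums). Finally, a map `Fin n → Fin (m + 1)` attaining
every nonzero value is a surjection `Fin (n + 1) → Fin (m + 1)` sending the new point to `0`; as
surjections are labelled partitions, there are `(m + 1)! S(n + 1, m + 1) / (m + 1)` of them.
-/

open Finset

/-- A 01 matrix (encoded with `Bool` entries) is lonesum iff it avoids the
two 2×2 permutation submatrices. -/
def Lonesum {n k : ℕ} (M : Fin n → Fin k → Bool) : Prop :=
  ∀ i i' : Fin n, ∀ j j' : Fin k, i < i' → j < j' →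
    ¬(M i j = true ∧ M i j' = false ∧ M i' j = false ∧ M i' j' = true) ∧
    ¬(M i j = false ∧ M i j' = true ∧ M i' j = true ∧ M i' j' = false)

/-- The Stirling number of the second kind `S(n,m)`: the number of partitions
of an `n`-element set into exactly `m` nonempty blocks. -/
noncomputable def stirling (n m : ℕ) : ℕ :=
  Nat.card {P : Finpartition (univ : Finset (Fin n)) // P.parts.card = m}

open Function

section Rank

variable {α : Type*} [LinearOrder α]

theorem Finset.exists_card_filter_le_eq (S : Finset α) {u : ℕ} (hu : u ∈ Icc 1 #S) :
    ∃ x ∈ S, #{s ∈ S | s ≤ x} = u := by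
  set r : α → ℕ := fun x => #{s ∈ S | s ≤ x}
  have hr : StrictMonoOn r S := fun a _ b hb hab =>
    card_lt_card <| (ssubset_iff_of_subset fun s hs => by
      simp only [mem_filter] at hs ⊢; exact ⟨hs.1, hs.2.trans hab.le⟩).2
      ⟨b, by simpa using hb, by simp [hab]⟩
  have hsub : S.image r ⊆ Icc 1 #S := fun v hv => by
    obtain ⟨x, hx, rfl⟩ := mem_image.1 hv
    exact mem_Icc.2 ⟨card_pos.2 ⟨x, by simp [hx]⟩, card_filter_le _ _⟩
  have himage : S.image r = Icc 1 #S :=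
    eq_of_subset_of_card_le hsub (by rw [card_image_of_injOn hr.injOn, Nat.card_Icc]; omega)
  exact mem_image.1 (himage ▸ hu)

/-- `{s ∈ S | s ≤ x}` and the upper set `T` are disjoint if `x ∉ T`, and cover `S` if `x ∈ T`. -/
theorem Finset.mem_iff_card_lt_card_filter_le_add {S T : Finset α} (hTS : T ⊆ S)
    (hT : ∀ a ∈ T, ∀ b ∈ S, a ≤ b → b ∈ T) {x : α} (hx : x ∈ S) :
    x ∈ T ↔ #S < #{s ∈ S | s ≤ x} + #T := by
  set A := {s ∈ S | s ≤ x}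
  have hAS : A ∪ T ⊆ S := union_subset (filter_subset _ _) hTS
  have key := card_union_add_card_inter A T
  constructor
  · intro hxT
    have hunion : A ∪ T = S := subset_antisymm hAS fun b hb => by
      rcases le_total b x with hbx | hxb
      · exact mem_union_left _ (mem_filter.2 ⟨hb, hbx⟩)
      · exact mem_union_right _ (hT x hxT b hb hxb)
    have : 0 < #(A ∩ T) := card_pos.2 ⟨x, mem_inter.2 ⟨mem_filter.2 ⟨hx, le_rfl⟩, hxT⟩⟩
    rw [hunion] at key
    omega
  · intro hcard
    by_contra hxT
    have hAT : A ∩ T = ∅ := disjoint_iff_inter_eq_empty.1 <| disjoint_left.2 fun b hbA hbT =>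
      hxT (hT b hbT x hx (mem_filter.1 hbA).2)
    have := card_le_card hAS
    rw [hAT, card_empty] at key
    omega

theorem Finset.card_filter_le_image_Icc {W : ℕ → α} {m s : ℕ} (hW : StrictMonoOn W (Set.Iic m))
    (hs : s ≤ m) : #{y ∈ (Icc 1 m).image W | y ≤ W s} = s := by
  have : {a ∈ Icc 1 m | W a ≤ W s} = Icc 1 s := by
    ext a
    simp only [mem_filter, mem_Icc]
    constructor
    · rintro ⟨⟨ha1, ham⟩, h⟩
      exact ⟨ha1, (hW.le_iff_le ham hs).1 h⟩
    · rintro ⟨ha1, has⟩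
      exact ⟨⟨ha1, has.trans hs⟩, (hW.le_iff_le (has.trans hs) hs).2 has⟩
  rw [filter_image, this, card_image_of_injOn (hW.injOn.mono fun a ha => ?_), Nat.card_Icc]
  · omega
  · exact (mem_Icc.1 ha).2.trans hs

end Rank

theorem Finpartition.eq_of_forall_part_eq {β : Type*} [DecidableEq β] {s : Finset β}
    {P Q : Finpartition s} (h : ∀ a ∈ s, P.part a = Q.part a) : P = Q := by
  ext t
  constructor <;> intro ht
  · obtain ⟨a, ha, rfl⟩ := P.part_surjOn ht
    rw [h a ha]
    exact Q.part_mem.2 ha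
  · obtain ⟨a, ha, rfl⟩ := Q.part_surjOn ht
    rw [← h a ha]
    exact P.part_mem.2 ha

section Surjections

variable {α β : Type*} [Fintype α] [DecidableEq α]

def Finpartition.labelPart (P : Finpartition (univ : Finset α)) (e : P.parts ≃ β) (x : α) : β :=
  e ⟨P.part x, P.part_mem.2 (mem_univ x)⟩

theorem Finpartition.labelPart_eq_labelPart_iff (P : Finpartition (univ : Finset α))
    (e : P.parts ≃ β) {x y : α} : P.labelPart e x = P.labelPart e y ↔ P.part x = P.part y := by
  simp [labelPart]

theorem Finpartition.surjective_labelPart (P : Finpartition (univ : Finset α)) (e : P.parts ≃ β) :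
    Surjective (P.labelPart e) := fun b => by
  obtain ⟨x, hx⟩ := P.nonempty_of_mem_parts (e.symm b).2
  exact ⟨x, e.eq_symm_apply.1 (Subtype.ext (P.part_eq_of_mem (e.symm b).2 hx))⟩

def surjectiveEquivProd [DecidableEq β] (a : α) (b : β) :
    {g : α → β // Surjective g} ≃ β × {g : α → β // Surjective g ∧ g a = b} where
  toFun g := (g.1 a, ⟨Equiv.swap b (g.1 a) ∘ g.1, (Equiv.surjective _).comp g.2, by simp⟩)
  invFun p := ⟨Equiv.swap b p.1 ∘ p.2.1, (Equiv.surjective _).comp p.2.2.1⟩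
  left_inv g := by ext x; simp
  right_inv p := by
    obtain ⟨c, g, hg, hga⟩ := p
    ext x <;> simp [hga]

variable [Fintype β]

def surjectiveOfLabelling
    (p : Σ P : {P : Finpartition (univ : Finset α) // #P.parts = Fintype.card β}, P.1.parts ≃ β) :
    {g : α → β // Surjective g} :=
  ⟨p.1.1.labelPart p.2, p.1.1.surjective_labelPart p.2⟩

theorem injective_surjectiveOfLabelling : Injective (surjectiveOfLabelling (α := α) (β := β)) := by
  rintro ⟨⟨P, hP⟩, e⟩ ⟨⟨Q, hQ⟩, d⟩ h
  have hg : P.labelPart e = Q.labelPart d := congrArg Subtype.val h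
  obtain rfl : P = Q := Finpartition.eq_of_forall_part_eq fun x _ => by
    ext y
    rw [P.mem_part_iff_part_eq_part (mem_univ _) (mem_univ _),
      Q.mem_part_iff_part_eq_part (mem_univ _) (mem_univ _), ← P.labelPart_eq_labelPart_iff e,
      ← Q.labelPart_eq_labelPart_iff d, hg]
  obtain rfl : e = d := Equiv.ext fun ⟨t, ht⟩ => by
    obtain ⟨x, -, rfl⟩ := P.part_surjOn ht
    exact congrFun hg x
  rfl

theorem surjective_surjectiveOfLabelling :
    Surjective (surjectiveOfLabelling (α := α) (β := β)) := by
  rintro ⟨g, hg⟩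
  classical
  let P : Finpartition (univ : Finset α) := .ofSetoid (Setoid.ker g)
  have hP : ∀ x y, P.part x = P.part y ↔ g x = g y := fun x y => by
    rw [← P.mem_part_iff_part_eq_part (mem_univ _) (mem_univ _)]
    exact Finpartition.mem_part_ofSetoid_iff_rel.trans eq_comm
  let ψ : β → P.parts := fun b => ⟨P.part (surjInv hg b), P.part_mem.2 (mem_univ _)⟩
  have hψ : Bijective ψ := by
    refine ⟨fun b b' h => ?_, fun ⟨t, ht⟩ => ?_⟩
    · simpa [surjInv_eq] using (hP _ _).1 (congrArg Subtype.val h)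
    · obtain ⟨x, -, rfl⟩ := P.part_surjOn ht
      exact ⟨g x, Subtype.ext ((hP _ _).2 (surjInv_eq hg _))⟩
  have hcard : #P.parts = Fintype.card β := by
    rw [← Fintype.card_coe, Fintype.card_congr (Equiv.ofBijective ψ hψ)]
  refine ⟨⟨⟨P, hcard⟩, (Equiv.ofBijective ψ hψ).symm⟩, Subtype.ext (funext fun x => ?_)⟩
  refine (Equiv.symm_apply_eq _).2 (Subtype.ext ?_)
  exact (hP _ _).2 (surjInv_eq hg _).symm

theorem card_surjective_eq_card_finpartition_mul_factorial [DecidableEq β] :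
    Nat.card {g : α → β // Surjective g} =
      Nat.card {P : Finpartition (univ : Finset α) // #P.parts = Fintype.card β} *
        (Fintype.card β).factorial := by
  rw [← Nat.card_congr (Equiv.ofBijective _
    ⟨injective_surjectiveOfLabelling, surjective_surjectiveOfLabelling⟩), Nat.card_sigma]
  have hterm : ∀ P : {P : Finpartition (univ : Finset α) // #P.parts = Fintype.card β},
      Nat.card (P.1.parts ≃ β) = (Fintype.card β).factorial := fun P => by
    have hc : Fintype.card P.1.parts = Fintype.card β := by rw [Fintype.card_coe, P.2]
    rw [Nat.card_eq_fintype_card, Fintype.card_equiv (Fintype.equivOfCardEq hc), hc]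
  rw [sum_congr rfl fun P _ => hterm P, sum_const, card_univ, smul_eq_mul, Nat.card_eq_fintype_card]

end Surjections

def HitsNonzero {ι : Type*} {m : ℕ} (f : ι → Fin (m + 1)) : Prop :=
  ∀ t, t ≠ 0 → ∃ i, f i = t

theorem HitsNonzero.le_card {ι : Type*} [Fintype ι] {m : ℕ} {f : ι → Fin (m + 1)}
    (hf : HitsNonzero f) : m ≤ Fintype.card ι := by
  classical
  calc m = #(univ.erase (0 : Fin (m + 1))) := by simp
    _ ≤ #(univ.image f) := card_le_card fun t ht => by
      obtain ⟨i, rfl⟩ := hf t (ne_of_mem_erase ht)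
      exact mem_image_of_mem f (mem_univ i)
    _ ≤ Fintype.card ι := card_image_le

def hitsNonzeroEquivSurjective (n m : ℕ) :
    {f : Fin n → Fin (m + 1) // HitsNonzero f} ≃
      {g : Fin (n + 1) → Fin (m + 1) // Surjective g ∧ g 0 = 0} where
  toFun f := ⟨Fin.cons 0 f.1, fun t => by
    by_cases ht : t = 0
    · exact ⟨0, ht ▸ rfl⟩
    · obtain ⟨i, hi⟩ := f.2 t ht
      exact ⟨i.succ, by simpa using hi⟩, rfl⟩
  invFun g := ⟨Fin.tail g.1, fun t ht => by
    obtain ⟨x, hx⟩ := g.2.1 t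
    cases x using Fin.cases with
    | zero => exact absurd (hx.symm.trans g.2.2) ht
    | succ i => exact ⟨i, hx⟩⟩
  left_inv f := rfl
  right_inv g := Subtype.ext (by rw [← Fin.cons_self_tail g.1, g.2.2])

theorem card_hitsNonzero (n m : ℕ) :
    Nat.card {f : Fin n → Fin (m + 1) // HitsNonzero f} =
      m.factorial * stirling (n + 1) (m + 1) := by
  have h := card_surjective_eq_card_finpartition_mul_factorial (α := Fin (n + 1)) (β := Fin (m + 1))
  rw [Nat.card_congr (surjectiveEquivProd 0 0), Nat.card_prod, ← Nat.card_congr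
    (hitsNonzeroEquivSurjective n m), Fintype.card_fin, Nat.card_eq_fintype_card (α := Fin _),
    Fintype.card_fin, Nat.factorial_succ, ← stirling] at h
  apply Nat.eq_of_mul_eq_mul_left m.add_one_pos
  rw [h]
  ring

section NestedRows

variable {ι κ : Type*} [Fintype κ]

def rowSum (M : ι → κ → Bool) (i : ι) : ℕ := #{j | M i j = true}

variable {M : ι → κ → Bool}

theorem rowSum_ne_zero {i : ι} {j : κ} (h : M i j = true) : rowSum M i ≠ 0 :=
  (card_pos.2 ⟨j, by simpa using h⟩).ne'

theorem le_of_rowSum_le (hM : ∀ i i', M i ≤ M i' ∨ M i' ≤ M i) {i i' : ι}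
    (h : rowSum M i ≤ rowSum M i') : M i ≤ M i' := by
  rcases hM i i' with hii' | hi'i
  · exact hii'
  have hsupp : univ.filter (M i' · = true) = univ.filter (M i · = true) :=
    eq_of_subset_of_card_le (monotone_filter_right _ fun j _ => Bool.le_iff_imp.1 (hi'i j)) h
  refine le_of_eq (funext fun j => Bool.eq_iff_iff.2 ?_)
  simpa using (congrArg (j ∈ ·) hsupp).symm

variable [Fintype ι]

def rowSums (M : ι → κ → Bool) : Finset ℕ := (univ.image (rowSum M)).erase 0

def rowRank (M : ι → κ → Bool) (i : ι) : ℕ := #{s ∈ rowSums M | s ≤ rowSum M i}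

def colRank (M : ι → κ → Bool) (j : κ) : ℕ := #((univ.filter (M · j = true)).image (rowSum M))

theorem rowSum_mem_rowSums {i : ι} (h : rowSum M i ≠ 0) : rowSum M i ∈ rowSums M :=
  mem_erase.2 ⟨h, mem_image_of_mem _ (mem_univ i)⟩

theorem card_filter_rowSums_le_zero : #{s ∈ rowSums M | s ≤ 0} = 0 :=
  card_eq_zero.2 <| filter_eq_empty_iff.2 fun _ hs hle => ne_of_mem_erase hs (Nat.le_zero.1 hle)

theorem rowRank_le (i : ι) : rowRank M i ≤ #(rowSums M) := card_filter_le _ _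

theorem image_rowSum_subset_rowSums (j : κ) :
    (univ.filter (M · j = true)).image (rowSum M) ⊆ rowSums M := fun s hs => by
  obtain ⟨i, hi, rfl⟩ := mem_image.1 hs
  exact rowSum_mem_rowSums (rowSum_ne_zero (mem_filter.1 hi).2)

theorem colRank_le (j : κ) : colRank M j ≤ #(rowSums M) :=
  card_le_card (image_rowSum_subset_rowSums j)

theorem apply_eq_true_iff_lt_rowRank_add_colRank (hM : ∀ i i', M i ≤ M i' ∨ M i' ≤ M i)
    (i : ι) (j : κ) :
    M i j = true ↔ #(rowSums M) < rowRank M i + colRank M j := by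
  by_cases h0 : rowSum M i = 0
  · rw [rowRank, h0, card_filter_rowSums_le_zero, zero_add]
    exact iff_of_false (fun h => rowSum_ne_zero h h0) (colRank_le j).not_gt
  rw [rowRank, colRank, ← mem_iff_card_lt_card_filter_le_add (image_rowSum_subset_rowSums j)
    ?_ (rowSum_mem_rowSums h0)]
  · simp only [mem_image, mem_filter, mem_univ, true_and]
    refine ⟨fun h => ⟨i, h, rfl⟩, fun ⟨i', hi', hsum⟩ => ?_⟩
    exact Bool.le_iff_imp.1 (le_of_rowSum_le hM hsum.le j) hi'
  · simp only [mem_image, mem_filter, mem_univ, true_and]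
    rintro _ ⟨i₁, hi₁, rfl⟩ _ hs hle
    obtain ⟨-, hs⟩ := mem_erase.1 hs
    obtain ⟨i₂, -, rfl⟩ := mem_image.1 hs
    exact ⟨i₂, Bool.le_iff_imp.1 (le_of_rowSum_le hM hle j) hi₁, rfl⟩

end NestedRows

section Threshold

variable {ι κ : Type*} {m : ℕ}

def thresholdMatrix (m : ℕ) (f : ι → Fin (m + 1)) (g : κ → Fin (m + 1)) : ι → κ → Bool :=
  fun i j => decide (m < (f i : ℕ) + g j)

theorem thresholdMatrix_right_injective {f : ι → Fin (m + 1)} (hf : HitsNonzero f) :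
    Injective (thresholdMatrix (κ := κ) m f) := by
  intro g g' h
  funext j
  by_contra hne
  wlog hlt : g j < g' j generalizing g g'
  · exact this h.symm (Ne.symm hne) (lt_of_le_of_ne (not_lt.1 hlt) (Ne.symm hne))
  obtain ⟨i, hi⟩ := hf ⟨m - g j, by omega⟩ (fun h => by
    simp [Fin.ext_iff] at h; have := (g' j).is_le; omega)
  have hij := congrFun (congrFun h i) j
  have hi' : (f i : ℕ) = m - g j := by rw [hi]
  simp only [thresholdMatrix, hi', decide_eq_decide] at hij
  have := (g' j).is_le
  omega

variable [Fintype κ]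

def thresholdCount (m : ℕ) (g : κ → Fin (m + 1)) (s : ℕ) : ℕ := #{j | m < s + g j}

theorem rowSum_thresholdMatrix (f : ι → Fin (m + 1)) (g : κ → Fin (m + 1)) (i : ι) :
    rowSum (thresholdMatrix m f g) i = thresholdCount m g (f i) := by
  simp [rowSum, thresholdMatrix, thresholdCount]

theorem thresholdCount_zero (g : κ → Fin (m + 1)) : thresholdCount m g 0 = 0 :=
  card_eq_zero.2 <| filter_eq_empty_iff.2 fun j _ => by have := (g j).is_le; omega

theorem monotone_thresholdCount (g : κ → Fin (m + 1)) : Monotone (thresholdCount m g) :=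
  fun _ _ h => card_le_card fun j hj => by simp only [mem_filter, mem_univ, true_and] at hj ⊢; omega

/-- Raising the threshold from `s` to `s + 1` adds exactly the columns with `g j = m - s`. -/
theorem strictMonoOn_thresholdCount_iff (g : κ → Fin (m + 1)) :
    StrictMonoOn (thresholdCount m g) (Set.Iic m) ↔ HitsNonzero g := by
  constructor
  · intro hg t ht
    have ht0 : (t : ℕ) ≠ 0 := fun h => ht (Fin.ext h)
    have hlt := hg (show m - t ∈ Set.Iic m by simp) (show m - t + 1 ∈ Set.Iic m by
      simp only [Set.mem_Iic]; omega) (Nat.lt_succ_self _)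
    obtain ⟨j, hj, hj'⟩ := exists_mem_notMem_of_card_lt_card hlt
    simp only [mem_filter, mem_univ, true_and] at hj hj'
    exact ⟨j, Fin.ext (by have := t.is_le; omega)⟩
  · intro hg a _ b hb hab
    rw [Set.mem_Iic] at hb
    obtain ⟨j, hj⟩ := hg ⟨m - a, by omega⟩ (fun h => by simp [Fin.ext_iff] at h; omega)
    have hj' : (g j : ℕ) = m - a := by rw [hj]
    refine card_lt_card <| (ssubset_iff_of_subset fun j hj => ?_).2 ⟨j, ?_, ?_⟩
    · simp only [mem_filter, mem_univ, true_and] at hj ⊢; omega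
    all_goals simp only [mem_filter, mem_univ, true_and, hj']; omega

variable {f : ι → Fin (m + 1)} {g : κ → Fin (m + 1)}

theorem rowSums_thresholdMatrix [Fintype ι] (hf : HitsNonzero f) (hg : HitsNonzero g) :
    rowSums (thresholdMatrix m f g) = (Icc 1 m).image (thresholdCount m g) := by
  have hW := (strictMonoOn_thresholdCount_iff g).2 hg
  ext x
  simp only [rowSums, mem_erase, mem_image, mem_univ, true_and, mem_Icc, rowSum_thresholdMatrix]
  constructor
  · rintro ⟨hx, i, rfl⟩
    refine ⟨f i, ⟨Nat.one_le_iff_ne_zero.2 fun h => hx ?_, (f i).is_le⟩, rfl⟩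
    rw [h, thresholdCount_zero]
  · rintro ⟨s, ⟨hs1, hsm⟩, rfl⟩
    obtain ⟨i, hi⟩ := hf ⟨s, by omega⟩ (fun h => by simp [Fin.ext_iff] at h; omega)
    have hpos := hW (show 0 ∈ Set.Iic m by simp) (show s ∈ Set.Iic m from hsm) hs1
    rw [thresholdCount_zero] at hpos
    exact ⟨hpos.ne', i, by rw [hi]⟩

theorem card_rowSums_thresholdMatrix [Fintype ι] (hf : HitsNonzero f) (hg : HitsNonzero g) :
    #(rowSums (thresholdMatrix m f g)) = m := by
  have hW := (strictMonoOn_thresholdCount_iff g).2 hg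
  rw [rowSums_thresholdMatrix hf hg, card_image_of_injOn (hW.injOn.mono fun s hs => ?_),
    Nat.card_Icc, Nat.add_sub_cancel]
  exact (mem_Icc.1 hs).2

theorem rowRank_thresholdMatrix [Fintype ι] (hf : HitsNonzero f) (hg : HitsNonzero g) (i : ι) :
    rowRank (thresholdMatrix m f g) i = f i := by
  rw [rowRank, rowSums_thresholdMatrix hf hg, rowSum_thresholdMatrix,
    card_filter_le_image_Icc ((strictMonoOn_thresholdCount_iff g).2 hg) (f i).is_le]

/-- The hypothesis makes the row sums `thresholdCount m g s`, `s ≤ m`, pairwise distinct. -/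
theorem hitsNonzero_of_rowRank_thresholdMatrix [Fintype ι] (hf : HitsNonzero f)
    (h : ∀ i, rowRank (thresholdMatrix m f g) i = f i) : HitsNonzero g := by
  set R := rowSums (thresholdMatrix m f g)
  have hrank : ∀ s ≤ m, #{x ∈ R | x ≤ thresholdCount m g s} = s := by
    intro s hs
    rcases Nat.eq_zero_or_pos s with rfl | hs0
    · rw [thresholdCount_zero, card_filter_rowSums_le_zero]
    obtain ⟨i, hi⟩ := hf ⟨s, by omega⟩ (fun h => by simp [Fin.ext_iff] at h; omega)
    have hi' := h i
    rwa [rowRank, rowSum_thresholdMatrix, hi] at hi'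
  rw [← strictMonoOn_thresholdCount_iff]
  refine (monotone_thresholdCount g).monotoneOn _ |>.strictMonoOn_of_injOn fun a ha b hb hab => ?_
  rw [← hrank a ha, ← hrank b hb, hab]

end Threshold

theorem exists_eq_thresholdMatrix {ι κ : Type*} [Fintype ι] [Fintype κ] {M : ι → κ → Bool}
    (hM : ∀ i i', M i ≤ M i' ∨ M i' ≤ M i) :
    ∃ (m : ℕ) (f : ι → Fin (m + 1)) (g : κ → Fin (m + 1)),
      HitsNonzero f ∧ HitsNonzero g ∧ M = thresholdMatrix m f g := by
  set m := #(rowSums M)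
  let f : ι → Fin (m + 1) := fun i => ⟨rowRank M i, Nat.lt_succ_of_le (rowRank_le i)⟩
  let g : κ → Fin (m + 1) := fun j => ⟨colRank M j, Nat.lt_succ_of_le (colRank_le j)⟩
  have hMfg : M = thresholdMatrix m f g := funext₂ fun i j => by
    rw [Bool.eq_iff_iff, apply_eq_true_iff_lt_rowRank_add_colRank hM]
    simp [thresholdMatrix, f, g, m]
  have hf : HitsNonzero f := fun t ht => by
    obtain ⟨x, hx, hrank⟩ := exists_card_filter_le_eq (rowSums M)
      (u := t) (mem_Icc.2 ⟨Nat.one_le_iff_ne_zero.2 fun h => ht (Fin.ext h), t.is_le⟩)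
    obtain ⟨i, -, rfl⟩ := mem_image.1 (mem_of_mem_erase hx)
    exact ⟨i, Fin.ext hrank⟩
  exact ⟨m, f, g, hf, hitsNonzero_of_rowRank_thresholdMatrix hf fun i => by rw [← hMfg], hMfg⟩

theorem Lonesum.le_or_le {n k : ℕ} {M : Fin n → Fin k → Bool} (hM : Lonesum M) (i i' : Fin n) :
    M i ≤ M i' ∨ M i' ≤ M i := by
  by_contra! h
  simp only [Pi.le_def, Bool.le_iff_imp, not_forall, Bool.not_eq_true] at h
  obtain ⟨⟨j, hij, hi'j⟩, ⟨j', hi'j', hij'⟩⟩ := h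
  have hii' : i ≠ i' := by rintro rfl; simp_all
  have hjj' : j ≠ j' := by rintro rfl; simp_all
  rcases hii'.lt_or_gt with hi | hi <;> rcases hjj'.lt_or_gt with hj | hj
  · exact (hM i i' j j' hi hj).1 ⟨hij, hij', hi'j, hi'j'⟩
  · exact (hM i i' j' j hi hj).2 ⟨hij', hij, hi'j', hi'j⟩
  · exact (hM i' i j j' hi hj).2 ⟨hi'j, hi'j', hij, hij'⟩
  · exact (hM i' i j' j hi hj).1 ⟨hi'j', hi'j, hij', hij⟩

theorem lonesum_thresholdMatrix {n k m : ℕ} (f : Fin n → Fin (m + 1)) (g : Fin k → Fin (m + 1)) :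
    Lonesum (thresholdMatrix m f g) := by
  intro i i' j j' _ _
  constructor <;> rintro ⟨h₁, h₂, h₃, h₄⟩ <;> simp [thresholdMatrix] at h₁ h₂ h₃ h₄ <;> omega

def thresholdLonesum (n k : ℕ) :
    (Σ m : Fin (min n k + 1), {f : Fin n → Fin (m + 1) // HitsNonzero f} ×
      {g : Fin k → Fin (m + 1) // HitsNonzero g}) → {M : Fin n → Fin k → Bool // Lonesum M} :=
  fun p => ⟨thresholdMatrix p.1 p.2.1 p.2.2, lonesum_thresholdMatrix _ _⟩

theorem bijective_thresholdLonesum (n k : ℕ) : Bijective (thresholdLonesum n k) := by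
  constructor
  · rintro ⟨m, ⟨f, hf⟩, ⟨g, hg⟩⟩ ⟨m', ⟨f', hf'⟩, ⟨g', hg'⟩⟩ h
    have h : thresholdMatrix m f g = thresholdMatrix m' f' g' := congrArg Subtype.val h
    obtain rfl : m = m' := Fin.ext <| by
      rw [← card_rowSums_thresholdMatrix hf hg, h, card_rowSums_thresholdMatrix hf' hg']
    obtain rfl : f = f' := funext fun i => Fin.ext <| by
      rw [← rowRank_thresholdMatrix hf hg i, h, rowRank_thresholdMatrix hf' hg' i]
    obtain rfl : g = g' := thresholdMatrix_right_injective hf h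
    rfl
  · rintro ⟨M, hM⟩
    obtain ⟨m, f, g, hf, hg, rfl⟩ := exists_eq_thresholdMatrix hM.le_or_le
    have hm : m < min n k + 1 := by
      have := hf.le_card
      have := hg.le_card
      simp only [Fintype.card_fin] at *
      omega
    exact ⟨⟨⟨m, hm⟩, ⟨f, hf⟩, ⟨g, hg⟩⟩, rfl⟩

/-- Brewbaker's theorem: the number of `n × k` lonesum 01 matrices equals
`∑_{m=0}^{min(n,k)} m!·S(n+1,m+1)·m!·S(k+1,m+1)`. -/
theorem card_lonesum_eq (n k : ℕ) :
    Nat.card {M : Fin n → Fin k → Bool // Lonesum M} =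
      ∑ m ∈ Finset.range (min n k + 1),
        m.factorial * stirling (n + 1) (m + 1) *
          (m.factorial * stirling (k + 1) (m + 1)) := by
  rw [← Nat.card_congr (Equiv.ofBijective _ (bijective_thresholdLonesum n k)), Nat.card_sigma,
    ← Fin.sum_univ_eq_sum_range]
  refine sum_congr rfl fun m _ => ?_
  rw [Nat.card_prod, card_hitsNonzero, card_hitsNonzero]
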